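/- arXiv:2605.06360 — 4 statements merged into one kernel-verified Lean document; each statement's English description precedes it below -/
import Mathlib

section
/- Let $n \geq 1$, let $E_1, \ldots, E_n$ be non-empty finite sets, and let $A = \prod_{i=1}^n E_i$. Then for any function $f : A \to [0,1]$, we have $\mathbf{E}_{\boldsymbol{x}, \boldsymbol{x}' \in A}\, f(\boldsymbol{x}) \prod_{j=1}^n f(\boldsymbol{x} + (x_j' - x_j)\boldsymbol{e_j}) \geq c_n \left(\mathbf{E}_{\boldsymbol{x} \in A} f(\boldsymbol{x})\right)^{n+1}$ for some constant $c_n > 0$ depending only on $n$. -/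
/-!
Summing over `x'` factorises the left-hand side as `∑ₓ f x ∏ⱼ Sⱼ x`, where `Sⱼ x` is the sum of
`f` along the line through `x` in direction `j`. Since `Sⱼ` is constant on such lines, averaging
over them shows that the points with `Sⱼ x < θ |Eⱼ|` carry `f`-mass at most `θ |A|`. With
`θ = μ / (2(n+1))`, `μ` the mean of `f`, the remaining points carry mass at least `μ |A| / 2`, and
at each of them `∏ⱼ Sⱼ x ≥ θⁿ |A|`.
-/

open Finset Function

lemma sum_le_sum_filter_forall_add_sum_sum_filter_not {ι β : Type*} [Fintype ι] {s : Finset β}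
    {f : β → ℝ} (hf : ∀ x ∈ s, 0 ≤ f x) (P : ι → β → Prop) [∀ j x, Decidable (P j x)] :
    ∑ x ∈ s, f x ≤ ∑ x ∈ s with ∀ j, P j x, f x + ∑ j, ∑ x ∈ s with ¬P j x, f x := by
  simp_rw [sum_filter]
  rw [sum_comm, ← sum_add_distrib]
  refine sum_le_sum fun x hx => ?_
  have hterm j : 0 ≤ if ¬P j x then f x else 0 := ite_nonneg (hf x hx) le_rfl
  by_cases h : ∀ j, P j x
  · rw [if_pos h]
    exact le_add_of_nonneg_right (sum_nonneg fun j _ => hterm j)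
  · obtain ⟨j, hj⟩ := not_forall.1 h
    rw [if_neg h, zero_add]
    calc f x = if ¬P j x then f x else 0 := (if_pos hj).symm
      _ ≤ ∑ j, if ¬P j x then f x else 0 := single_le_sum (fun j _ => hterm j) (mem_univ j)

section LineSum

variable {ι : Type*} [DecidableEq ι] {α : ι → Type*}

def lineSum (E : ∀ i, Finset (α i)) (j : ι) (F : (∀ i, α i) → ℝ) (x : ∀ i, α i) : ℝ :=
  ∑ t ∈ E j, F (update x j t)

variable {E : ∀ i, Finset (α i)}

@[simp]
lemma lineSum_update (j : ι) (F : (∀ i, α i) → ℝ) (x : ∀ i, α i) (t : α j) :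
    lineSum E j F (update x j t) = lineSum E j F x := by
  simp [lineSum]

variable [Fintype ι]

lemma update_mem_piFinset {x : ∀ i, α i} (hx : x ∈ Fintype.piFinset E) {j : ι} {t : α j}
    (ht : t ∈ E j) : update x j t ∈ Fintype.piFinset E := by
  rw [Fintype.mem_piFinset] at hx ⊢
  intro i
  rcases eq_or_ne i j with rfl | h
  · simpa using ht
  · simpa [update_of_ne h] using hx i

lemma sum_lineSum (j : ι) (F : (∀ i, α i) → ℝ) :
    ∑ x ∈ Fintype.piFinset E, lineSum E j F x = #(E j) * ∑ x ∈ Fintype.piFinset E, F x := by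
  calc ∑ x ∈ Fintype.piFinset E, lineSum E j F x
      = ∑ p ∈ Fintype.piFinset E ×ˢ E j, F (update p.1 j p.2) := by
        rw [sum_product]; rfl
    _ = ∑ p ∈ Fintype.piFinset E ×ˢ E j, F p.1 := by
      -- `(x, t) ↦ (update x j t, x j)` is an involution of `piFinset E ×ˢ E j`
      refine sum_nbij' (fun p => (update p.1 j p.2, p.1 j)) (fun p => (update p.1 j p.2, p.1 j))
        ?_ ?_ ?_ ?_ ?_
      iterate 2
        rintro ⟨x, t⟩ hp
        rw [mem_product] at hp ⊢
        exact ⟨update_mem_piFinset hp.1 hp.2, Fintype.mem_piFinset.1 hp.1 j⟩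
      all_goals simp
    _ = _ := by simp [sum_product, mul_sum]

lemma sum_filter_lineSum {P : (∀ i, α i) → Prop} [DecidablePred P] {j : ι}
    (hP : ∀ x (t : α j), P (update x j t) ↔ P x) (F : (∀ i, α i) → ℝ) :
    ∑ x ∈ Fintype.piFinset E with P x, lineSum E j F x =
      #(E j) * ∑ x ∈ Fintype.piFinset E with P x, F x := by
  have h x :
      lineSum E j (fun y => if P y then F y else 0) x = if P x then lineSum E j F x else 0 := by
    split_ifs with hx <;> simp [lineSum, hP, hx]
  simpa [sum_filter, h] using sum_lineSum (E := E) j fun y => if P y then F y else 0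

lemma sum_filter_lineSum_lt_le {j : ι} (hE : (E j).Nonempty) {r : ℝ} (hr : 0 ≤ r)
    (f : (∀ i, α i) → ℝ) :
    ∑ x ∈ Fintype.piFinset E with lineSum E j f x < r * #(E j), f x ≤
      r * #(Fintype.piFinset E) := by
  set B := {x ∈ Fintype.piFinset E | lineSum E j f x < r * #(E j)}
  have hEj : (0 : ℝ) < #(E j) := by exact_mod_cast hE.card_pos
  refine le_of_mul_le_mul_left ?_ hEj
  calc (#(E j) : ℝ) * ∑ x ∈ B, f x = ∑ x ∈ B, lineSum E j f x :=
      (sum_filter_lineSum (fun x t => by simp) f).symm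
    _ ≤ (#B : ℝ) * (r * #(E j)) := by
      simpa using sum_le_card_nsmul B _ _ fun x hx => (mem_filter.1 hx).2.le
    _ ≤ (#(Fintype.piFinset E) : ℝ) * (r * #(E j)) := by
      gcongr
      apply filter_subset
    _ = #(E j) * (r * #(Fintype.piFinset E)) := by ring

lemma lineSum_nonneg {f : (∀ i, α i) → ℝ} (hf : ∀ x ∈ Fintype.piFinset E, 0 ≤ f x) (j : ι)
    {x : ∀ i, α i} (hx : x ∈ Fintype.piFinset E) : 0 ≤ lineSum E j f x :=
  sum_nonneg fun _ ht => hf _ (update_mem_piFinset hx ht)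

lemma sum_prod_update_eq_prod_lineSum (f : (∀ i, α i) → ℝ) (x : ∀ i, α i) :
    ∑ x' ∈ Fintype.piFinset E, ∏ j, f (update x j (x' j)) = ∏ j, lineSum E j f x :=
  (prod_univ_sum E fun j t => f (update x j t)).symm

lemma pow_mul_card_piFinset_le_prod_lineSum {θ : ℝ} (hθ : 0 ≤ θ) {f : (∀ i, α i) → ℝ}
    {x : ∀ i, α i} (hx : ∀ j, θ * #(E j) ≤ lineSum E j f x) :
    θ ^ Fintype.card ι * #(Fintype.piFinset E) ≤ ∏ j, lineSum E j f x :=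
  calc θ ^ Fintype.card ι * #(Fintype.piFinset E) = ∏ j, θ * #(E j) := by
        simp [prod_mul_distrib]
    _ ≤ ∏ j, lineSum E j f x := prod_le_prod (fun j _ => by positivity) fun j _ => hx j

theorem pow_mul_card_mul_sub_le_sum_mul_prod_lineSum (hE : ∀ i, (E i).Nonempty)
    {f : (∀ i, α i) → ℝ} (hf : ∀ x ∈ Fintype.piFinset E, 0 ≤ f x) {θ : ℝ} (hθ : 0 ≤ θ) :
    θ ^ Fintype.card ι * #(Fintype.piFinset E) *
        (∑ x ∈ Fintype.piFinset E, f x - Fintype.card ι * θ * #(Fintype.piFinset E)) ≤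
      ∑ x ∈ Fintype.piFinset E, f x * ∏ j, lineSum E j f x := by
  set A := Fintype.piFinset E
  set G := {x ∈ A | ∀ j, θ * #(E j) ≤ lineSum E j f x}
  have hG : ∑ x ∈ A, f x - Fintype.card ι * θ * #A ≤ ∑ x ∈ G, f x := by
    have hbad : ∑ j, ∑ x ∈ A with ¬θ * #(E j) ≤ lineSum E j f x, f x ≤
        Fintype.card ι * θ * #A := by
      calc _ ≤ ∑ _j : ι, θ * #A := sum_le_sum fun j _ => by
            simpa only [not_le] using sum_filter_lineSum_lt_le (hE j) hθ f
        _ = Fintype.card ι * θ * #A := by rw [sum_const, card_univ, nsmul_eq_mul, mul_assoc]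
    linarith [sum_le_sum_filter_forall_add_sum_sum_filter_not hf
      fun j x => θ * #(E j) ≤ lineSum E j f x]
  calc θ ^ Fintype.card ι * #A * (∑ x ∈ A, f x - Fintype.card ι * θ * #A)
      ≤ θ ^ Fintype.card ι * #A * ∑ x ∈ G, f x := by gcongr
    _ = ∑ x ∈ G, θ ^ Fintype.card ι * #A * f x := mul_sum ..
    _ ≤ ∑ x ∈ G, f x * ∏ j, lineSum E j f x := sum_le_sum fun x hx => by
      rw [mul_comm]
      obtain ⟨hxA, hxG⟩ := mem_filter.1 hx
      gcongr
      · exact hf x hxA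
      · exact pow_mul_card_piFinset_le_prod_lineSum hθ hxG
    _ ≤ ∑ x ∈ A, f x * ∏ j, lineSum E j f x :=
      sum_le_sum_of_subset_of_nonneg (filter_subset _ _) fun x hx _ =>
        mul_nonneg (hf x hx) (prod_nonneg fun j _ => lineSum_nonneg hf j hx)

end LineSum

theorem multidim_positivity_general (n : ℕ) :
    ∃ c : ℝ, 0 < c ∧
      ∀ (E : Fin n → Finset ℤ), (∀ i, (E i).Nonempty) →
        ∀ f : (Fin n → ℤ) → ℝ,
          (∀ x ∈ Fintype.piFinset E, f x ∈ Set.Icc (0 : ℝ) 1) →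
          c * ((∑ x ∈ Fintype.piFinset E, f x) / (Fintype.piFinset E).card) ^ (n + 1) ≤
            (∑ x ∈ Fintype.piFinset E, ∑ x' ∈ Fintype.piFinset E,
                f x * ∏ j, f (Function.update x j (x' j))) /
              ((Fintype.piFinset E).card : ℝ) ^ 2 := by
  refine ⟨1 / (2 * (2 * (n + 1)) ^ n), by positivity, fun E hE f hf => ?_⟩
  have hf₀ x hx : 0 ≤ f x := (hf x hx).1
  simp_rw [← mul_sum, sum_prod_update_eq_prod_lineSum]
  set A := Fintype.piFinset E
  have hA : (0 : ℝ) < #A := by exact_mod_cast card_pos.2 (Fintype.piFinset_nonempty.2 hE)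
  set μ := (∑ x ∈ A, f x) / #A with hμ_def
  have hμ : 0 ≤ μ := div_nonneg (sum_nonneg hf₀) hA.le
  set θ := μ / (2 * (n + 1))
  have hθ : n * θ ≤ μ / 2 := by
    rw [mul_div_assoc', div_le_div_iff₀ (by positivity) two_pos]
    nlinarith
  have key := pow_mul_card_mul_sub_le_sum_mul_prod_lineSum hE hf₀ (by positivity : 0 ≤ θ)
  rw [Fintype.card_fin] at key
  calc 1 / (2 * (2 * (n + 1)) ^ n) * μ ^ (n + 1) = θ ^ n * (μ / 2) := by ring
    _ ≤ θ ^ n * (μ - n * θ) := by gcongr; linarith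
    _ = θ ^ n * #A * (∑ x ∈ A, f x - n * θ * #A) / #A ^ 2 := by
      rw [hμ_def]
      field_simp
    _ ≤ _ := div_le_div_of_nonneg_right key (sq_nonneg _)

theorem multidim_positivity (n : ℕ) (hn : 1 ≤ n) :
    ∃ c : ℝ, 0 < c ∧
      ∀ (E : Fin n → Finset ℤ), (∀ i, (E i).Nonempty) →
        ∀ f : (Fin n → ℤ) → ℝ,
          (∀ x ∈ Fintype.piFinset E, f x ∈ Set.Icc (0 : ℝ) 1) →
          c * ((∑ x ∈ Fintype.piFinset E, f x) / (Fintype.piFinset E).card) ^ (n + 1) ≤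
            (∑ x ∈ Fintype.piFinset E, ∑ x' ∈ Fintype.piFinset E,
                f x * ∏ j, f (Function.update x j (x' j))) /
              ((Fintype.piFinset E).card : ℝ) ^ 2 :=
  multidim_positivity_general n
end

section
/- Let $q, L \geq 1$, let $f : \mathbb{Z} \to \mathbb{C}$ be $1$-bounded with support in an interval of length $N$, and let $h \in \mathbb{Z}$ with $|h| < q$. Then $\left| \|\mathbf{E}(f(\cdot + h) \mid \mathcal{B}_{(qL,q)})\|_2^2 - \|\mathbf{E}(f \mid \mathcal{B}_{(qL,q)})\|_2^2 \right| \leq 8 \frac{|h|}{q} N$. -/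
/-!
Write `x = (s L + k) q + r + 1` with `0 ≤ k < L` and `0 ≤ r < q`: the atom of `x` is indexed by
`(s, r)`, so `∑ ‖𝔼(f | 𝓑)‖² = L⁻¹ ∑_{r < q} Φ r`, where `Φ c` is the block energy
`∑ₛ ‖∑_{k < L} f ((s L + k) q + c + 1)‖²` of the progression `i ↦ f (i q + c + 1)` cut into
consecutive blocks of length `L`. Translating `f` by `h` replaces `Φ r` by `Φ (r + h)`, so the
difference is that of two windows of length `q` of `Φ`, at most `|h| · sup_c |Φ (c + q) - Φ c|`.
Now `Φ (c + q)` is the block energy of the same progression moved by one step. Splitting each block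
into its first entry and its tail, the squares of the first entries telescope and only the cross
terms between a tail and the first entries of its own and of the next block remain; each such
term pairs two points of the support of the progression, which has at most `N / q + 1` points,
so `|Φ (c + q) - Φ c| ≤ 4 N / q`.
-/

open scoped BigOperators

/-- Conditional expectation of `f` with respect to the partition with atom map `P`:
at each point, the average of `f` over the atom containing it. -/
noncomputable def condExp (P : ℤ → Set ℤ) (f : ℤ → ℂ) (x : ℤ) : ℂ :=
  (∑ᶠ y ∈ P x, f y) / (Nat.card (P x) : ℂ)

/-- Atom map of the partition `𝓑_{(qL,q)}` of `ℤ`: the common refinement of the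
partition into intervals `(qLs, qL(s+1)]` and the residue classes mod `q`.
Its atoms are `{qLs + qk + r : 0 ≤ k < L}` for `s ∈ ℤ`, `0 < r ≤ q`. -/
def Bpart (q L : ℕ) (x : ℤ) : Set ℤ :=
  {y | y % (q : ℤ) = x % (q : ℤ) ∧ (y - 1) / ((q : ℤ) * L) = (x - 1) / ((q : ℤ) * L)}

open Finset Function

theorem Function.HasFiniteSupport.comp_mul_add {M : Type*} [Zero M] {φ : ℤ → M}
    (hφ : φ.HasFiniteSupport) {n : ℤ} (hn : n ≠ 0) (c : ℤ) :
    (fun t => φ (t * n + c)).HasFiniteSupport :=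
  hφ.comp_of_injective fun _ _ h => mul_right_cancel₀ hn (add_right_cancel h)

theorem Function.HasFiniteSupport.sum_range_comp_mul_add {M : Type*} [AddCommMonoid M]
    {φ : ℤ → M} (hφ : φ.HasFiniteSupport) {n : ℤ} (hn : n ≠ 0) (L : ℕ) :
    (fun s => ∑ k ∈ range L, φ (s * n + k)).HasFiniteSupport :=
  HasFiniteSupport.sum (fun k : ℕ => hφ.comp_mul_add hn k) _

theorem finsum_eq_finsum_sum_range_mul_add {M : Type*} [AddCommMonoid M] (n : ℕ) [NeZero n]
    {φ : ℤ → M} (hφ : φ.HasFiniteSupport) :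
    ∑ᶠ x, φ x = ∑ᶠ s : ℤ, ∑ k ∈ range n, φ (s * n + k) := by
  rw [← finsum_comp_equiv (Int.divModEquiv n).symm,
    finsum_curry (fun p => φ ((Int.divModEquiv n).symm p))
      (hφ.comp_of_injective (Int.divModEquiv n).symm.injective)]
  simp only [Int.divModEquiv_symm_apply, finsum_eq_sum_of_fintype]
  exact finsum_congr fun s => Fin.sum_univ_eq_sum_range (fun k => φ (s * n + k)) n

theorem sum_range_succ_mul_add_eq_head_add_tail {M : Type*} [AddCommMonoid M] (G : ℤ → M)
    (m : ℕ) (s : ℤ) :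
    ∑ k ∈ range (m + 1), G (s * (m + 1 : ℕ) + k)
      = G (s * (m + 1 : ℕ)) + ∑ k ∈ range m, G (s * (m + 1 : ℕ) + k + 1) := by
  rw [sum_range_succ', add_comm]
  simp only [Nat.cast_add, Nat.cast_one, Nat.cast_zero, add_zero, add_assoc]

theorem sum_range_succ_mul_add_add_one_eq_tail_add_head {M : Type*} [AddCommMonoid M]
    (G : ℤ → M) (m : ℕ) (s : ℤ) :
    ∑ k ∈ range (m + 1), G (s * (m + 1 : ℕ) + k + 1)
      = ∑ k ∈ range m, G (s * (m + 1 : ℕ) + k + 1) + G ((s + 1) * (m + 1 : ℕ)) := by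
  rw [sum_range_succ]
  push_cast
  ring_nf

theorem abs_finsum_le {α : Type*} {f g : α → ℝ} (hg : g.HasFiniteSupport)
    (hfg : ∀ a, |f a| ≤ g a) : |∑ᶠ a, f a| ≤ ∑ᶠ a, g a := by
  rw [finsum_eq_sum g hg, finsum_eq_sum_of_support_subset f (s := hg.toFinset)
    fun a ha => hg.mem_toFinset.2 ((abs_pos.2 ha).trans_le (hfg a)).ne']
  exact (Finset.abs_sum_le_sum_abs _ _).trans (Finset.sum_le_sum fun a _ => hfg a)

theorem finsum_indicator_finset_one {α : Type*} (s : Finset α) :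
    ∑ᶠ x, (s : Set α).indicator (1 : α → ℝ) x = #s := by
  rw [← finsum_mem_def, finsum_mem_coe_finset]
  simp

theorem norm_sum_range_add_sub_sum_range_le {E : Type*} [SeminormedAddCommGroup E] (Φ : ℤ → E)
    (q : ℕ) {C : ℝ} (hΦ : ∀ c, ‖Φ (c + q) - Φ c‖ ≤ C) (h : ℤ) :
    ‖∑ r ∈ range q, Φ (r + h) - ∑ r ∈ range q, Φ r‖ ≤ |h| * C := by
  have step : ∀ h : ℤ, ∑ r ∈ range q, Φ (r + (h + 1))
      = ∑ r ∈ range q, Φ (r + h) + (Φ (h + q) - Φ h) := by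
    intro h
    have key := sum_range_succ' (fun r : ℕ => Φ (r + h)) q
    rw [sum_range_succ] at key
    simp only [Nat.cast_add, Nat.cast_one, Nat.cast_zero, zero_add] at key
    simp only [add_comm (h : ℤ) 1, ← add_assoc, add_comm h (q : ℤ)]
    rw [add_sub, eq_sub_iff_add_eq, key]
  induction h using Int.induction_on with
  | zero => simp
  | succ h ih =>
    rw [step, add_sub_right_comm]
    calc _ ≤ ‖∑ r ∈ range q, Φ (r + h) - ∑ r ∈ range q, Φ r‖ + ‖Φ (h + q) - Φ h‖ :=
          norm_add_le _ _
      _ ≤ |(h : ℤ)| * C + C := add_le_add ih (hΦ _)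
      _ = |(h : ℤ) + 1| * C := by
          rw [abs_of_nonneg (by omega : (0 : ℤ) ≤ h), abs_of_nonneg (by omega : (0 : ℤ) ≤ h + 1)]
          push_cast
          ring
  | pred h ih =>
    have back := step (-(h : ℤ) - 1)
    rw [sub_add_cancel, ← sub_eq_iff_eq_add] at back
    rw [← back, sub_right_comm]
    calc _ ≤ ‖∑ r ∈ range q, Φ (r + -h) - ∑ r ∈ range q, Φ r‖
            + ‖Φ (-h - 1 + q) - Φ (-h - 1)‖ := norm_sub_le _ _
      _ ≤ |-(h : ℤ)| * C + C := add_le_add ih (hΦ _)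
      _ = |-(h : ℤ) - 1| * C := by
          rw [abs_of_nonpos (by omega : -(h : ℤ) ≤ 0), abs_of_nonpos (by omega : -(h : ℤ) - 1 ≤ 0)]
          push_cast
          ring

section BlockEnergy

variable {E : Type*} [SeminormedAddCommGroup E]

noncomputable def blockEnergy (L : ℕ) (G : ℤ → E) : ℝ :=
  ∑ᶠ s : ℤ, ‖∑ k ∈ range L, G (s * L + k)‖ ^ 2

theorem abs_finsum_norm_add_sq_sub_le [InnerProductSpace ℝ E] {g g' τ : ℤ → E}
    (hg : g.HasFiniteSupport) (hg' : g'.HasFiniteSupport) (hτ : τ.HasFiniteSupport)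
    (hgg' : ∑ᶠ s, ‖g' s‖ ^ 2 = ∑ᶠ s, ‖g s‖ ^ 2) :
    |∑ᶠ s, ‖τ s + g' s‖ ^ 2 - ∑ᶠ s, ‖g s + τ s‖ ^ 2|
      ≤ 2 * ∑ᶠ s, ‖τ s‖ * (‖g s‖ + ‖g' s‖) := by
  have hsq : ∀ s, ‖τ s + g' s‖ ^ 2 - ‖g s + τ s‖ ^ 2
      = (‖g' s‖ ^ 2 - ‖g s‖ ^ 2) + 2 * (inner ℝ (τ s) (g' s) - inner ℝ (g s) (τ s)) := by
    intro s
    rw [norm_add_sq_real, norm_add_sq_real]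
    ring
  rw [← finsum_sub_distrib (by fun_prop (disch := simp)) (by fun_prop (disch := simp)),
    finsum_congr hsq,
    finsum_add_distrib (by fun_prop (disch := simp)) (by fun_prop (disch := simp)),
    finsum_sub_distrib (by fun_prop (disch := simp)) (by fun_prop (disch := simp)), hgg',
    sub_self, zero_add, mul_finsum' _ _ (by fun_prop (disch := simp))]
  refine abs_finsum_le (by fun_prop (disch := simp)) fun s => ?_
  have h₁ := abs_real_inner_le_norm (τ s) (g' s)
  have h₂ := abs_real_inner_le_norm (g s) (τ s)
  simp only [abs_mul, abs_two]
  nlinarith [abs_sub (inner ℝ (τ s) (g' s)) (inner ℝ (g s) (τ s))]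

variable {G : ℤ → E} {b : ℤ} {n : ℕ}

theorem norm_mul_norm_le_indicator_Ioc (hG : ∀ i, ‖G i‖ ≤ 1)
    (hsupp : support G ⊆ Set.Icc b (b + n)) {x y : ℤ} (hxy : x < y) :
    ‖G y‖ * ‖G x‖ ≤ (Ioc b (b + n) : Set ℤ).indicator 1 y := by
  by_cases hx : G x = 0
  · simp [hx, Set.indicator_nonneg]
  by_cases hy : G y = 0
  · simp [hy, Set.indicator_nonneg]
  have hx' := hsupp hx
  have hy' := hsupp hy
  simp only [Set.mem_Icc] at hx' hy'
  rw [Set.indicator_of_mem (by simp; omega)]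
  simpa using mul_le_one₀ (hG y) (norm_nonneg _) (hG x)

theorem norm_mul_norm_le_indicator_Ico (hG : ∀ i, ‖G i‖ ≤ 1)
    (hsupp : support G ⊆ Set.Icc b (b + n)) {y z : ℤ} (hyz : y < z) :
    ‖G y‖ * ‖G z‖ ≤ (Ico b (b + n) : Set ℤ).indicator 1 y := by
  by_cases hz : G z = 0
  · simp [hz, Set.indicator_nonneg]
  by_cases hy : G y = 0
  · simp [hy, Set.indicator_nonneg]
  have hz' := hsupp hz
  have hy' := hsupp hy
  simp only [Set.mem_Icc] at hz' hy'
  rw [Set.indicator_of_mem (by simp; omega)]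
  simpa using mul_le_one₀ (hG y) (norm_nonneg _) (hG z)

theorem norm_blockTail_mul_le (hG : ∀ i, ‖G i‖ ≤ 1) (hsupp : support G ⊆ Set.Icc b (b + n))
    (m : ℕ) (s : ℤ) :
    ‖∑ k ∈ range m, G (s * (m + 1 : ℕ) + k + 1)‖
        * (‖G (s * (m + 1 : ℕ))‖ + ‖G ((s + 1) * (m + 1 : ℕ))‖)
      ≤ ∑ k ∈ range (m + 1), ((Ioc b (b + n) : Set ℤ).indicator 1 (s * (m + 1 : ℕ) + k)
          + (Ico b (b + n) : Set ℤ).indicator 1 (s * (m + 1 : ℕ) + k)) := by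
  set L : ℤ := ((m + 1 : ℕ) : ℤ) with hL
  have hpair : ∀ k ∈ range m, ‖G (s * L + k + 1)‖ * (‖G (s * L)‖ + ‖G ((s + 1) * L)‖)
      ≤ (Ioc b (b + n) : Set ℤ).indicator 1 (s * L + k + 1)
        + (Ico b (b + n) : Set ℤ).indicator 1 (s * L + k + 1) := by
    intro k hk
    have hkm : (k : ℤ) < m := by simpa using hk
    rw [mul_add]
    exact add_le_add (norm_mul_norm_le_indicator_Ioc hG hsupp (by omega))
      (norm_mul_norm_le_indicator_Ico hG hsupp (by rw [add_mul, one_mul, hL]; push_cast; omega))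
  calc _ ≤ (∑ k ∈ range m, ‖G (s * L + k + 1)‖) * (‖G (s * L)‖ + ‖G ((s + 1) * L)‖) :=
        mul_le_mul_of_nonneg_right (norm_sum_le _ _) (by positivity)
    _ ≤ _ := by
        rw [sum_mul]
        refine (sum_le_sum hpair).trans ?_
        rw [sum_range_succ' _ m]
        push_cast
        simp only [add_assoc, add_zero]
        exact le_add_of_nonneg_right (add_nonneg (Set.indicator_nonneg (fun _ _ => zero_le_one) _)
          (Set.indicator_nonneg (fun _ _ => zero_le_one) _))

theorem abs_blockEnergy_comp_add_one_sub_le [InnerProductSpace ℝ E] (L : ℕ) [NeZero L]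
    (hG : ∀ i, ‖G i‖ ≤ 1) (hsupp : support G ⊆ Set.Icc b (b + n)) :
    |blockEnergy L (fun i => G (i + 1)) - blockEnergy L G| ≤ 4 * n := by
  obtain ⟨m, rfl⟩ := Nat.exists_eq_add_one_of_ne_zero (NeZero.ne L)
  have hfin : G.HasFiniteSupport := (Set.finite_Icc b (b + n)).subset hsupp
  unfold blockEnergy
  simp only [sum_range_succ_mul_add_eq_head_add_tail,
    sum_range_succ_mul_add_add_one_eq_tail_add_head]
  set L : ℤ := ((m + 1 : ℕ) : ℤ)
  have hL0 : L ≠ 0 := by omega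
  set g : ℤ → E := fun s => G (s * L)
  set τ : ℤ → E := fun s => ∑ k ∈ range m, G (s * L + k + 1)
  have hg : g.HasFiniteSupport := by simpa using hfin.comp_mul_add hL0 0
  have hτ : τ.HasFiniteSupport :=
    (hfin.comp_of_injective (add_left_injective 1)).sum_range_comp_mul_add hL0 m
  have hind : ∀ t : Finset ℤ, ((t : Set ℤ).indicator (1 : ℤ → ℝ)).HasFiniteSupport :=
    fun t => t.finite_toSet.subset Set.support_indicator_subset
  have hψ : HasFiniteSupport fun x =>
      (Ioc b (b + n) : Set ℤ).indicator (1 : ℤ → ℝ) x + (Ico b (b + n) : Set ℤ).indicator 1 x :=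
    (hind _).add (hind _)
  calc _ ≤ 2 * ∑ᶠ s, ‖τ s‖ * (‖g s‖ + ‖g (s + 1)‖) :=
        abs_finsum_norm_add_sq_sub_le (g' := fun s => g (s + 1)) hg
          (hg.comp_of_injective (f := g) (add_left_injective (1 : ℤ))) hτ
          (finsum_comp_equiv (Equiv.addRight 1) (f := fun s => ‖g s‖ ^ 2))
    _ ≤ 2 * ∑ᶠ x, ((Ioc b (b + n) : Set ℤ).indicator 1 x
          + (Ico b (b + n) : Set ℤ).indicator 1 x) := by
        rw [finsum_eq_finsum_sum_range_mul_add (m + 1) hψ]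
        gcongr
        exact finsum_le_finsum' (by fun_prop (disch := simp))
          (hψ.sum_range_comp_mul_add hL0 _) (norm_blockTail_mul_le hG hsupp m)
    _ = 4 * n := by
        rw [finsum_add_distrib (hind _) (hind _), finsum_indicator_finset_one,
          finsum_indicator_finset_one, Int.card_Ioc, Int.card_Ico]
        simp
        ring

end BlockEnergy

theorem exists_support_comp_mul_add_subset_Icc {M : Type*} [Zero M] {f : ℤ → M} {a : ℤ}
    {N q : ℕ} (hq : 0 < q) (hf : support f ⊆ Set.Ioc a (a + N)) (c : ℤ) :
    ∃ b, support (fun i => f (i * q + c)) ⊆ Set.Icc b (b + (N / q : ℕ)) := by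
  have hq' : (0 : ℤ) < q := by exact_mod_cast hq
  set d := (c - a - 1) / q
  have hd₁ : d * q ≤ c - a - 1 := Int.ediv_mul_le _ hq'.ne'
  have hd₂ : c - a - 1 < (d + 1) * q := Int.lt_ediv_add_one_mul_self _ hq'
  -- `-d = ⌈(a + 1 - c) / q⌉` is the least `i` with `a < i * q + c`
  refine ⟨-d, fun i hi => ?_⟩
  obtain ⟨h₁, h₂⟩ := hf hi
  constructor
  · by_contra! hlt
    nlinarith
  · have : (i + d) * q ≤ N := by nlinarith
    have := (Int.le_ediv_iff_mul_le hq').2 this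
    push_cast
    omega

theorem abs_blockEnergy_add_sub_le {E : Type*} [SeminormedAddCommGroup E]
    [InnerProductSpace ℝ E] {q L N : ℕ} (hq : 0 < q) [NeZero L] {f : ℤ → E}
    (hbd : ∀ x, ‖f x‖ ≤ 1) {a : ℤ} (hsupp : support f ⊆ Set.Ioc a (a + N)) (c : ℤ) :
    |blockEnergy L (fun i => f (i * q + (c + q) + 1)) - blockEnergy L (fun i => f (i * q + c + 1))|
      ≤ 4 * (N / q : ℝ) := by
  obtain ⟨b, hb⟩ := exists_support_comp_mul_add_subset_Icc hq hsupp (c + 1)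
  simp only [← add_assoc] at hb
  have hnext : blockEnergy L (fun i => f (i * q + (c + q) + 1))
      = blockEnergy L (fun i => f ((i + 1) * q + c + 1)) := by
    congr 1
    ext i
    ring_nf
  rw [hnext]
  refine (abs_blockEnergy_comp_add_one_sub_le (G := fun i => f (i * q + c + 1)) L
    (fun i => hbd _) hb).trans ?_
  gcongr
  exact Nat.cast_div_le

theorem support_condExp_subset {P : ℤ → Set ℤ} (hP : ∀ x y, y ∈ P x → x ∈ P y) (f : ℤ → ℂ) :
    support (condExp P f) ⊆ ⋃ y ∈ support f, P y := by
  intro x hx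
  obtain ⟨y, hy, hfy⟩ := exists_ne_zero_of_finsum_mem_ne_zero (div_ne_zero_iff.1 hx).1
  exact Set.mem_biUnion hfy (hP x y hy)

section Bpart

variable {q L : ℕ}

theorem exists_Bpart_coords [NeZero q] [NeZero L] (y : ℤ) :
    ∃ s : ℤ, ∃ k < L, ∃ r < q, y = (s * L + k) * q + r + 1 := by
  obtain ⟨⟨t, r⟩, ht⟩ := (Int.divModEquiv q).symm.surjective (y - 1)
  obtain ⟨⟨s, k⟩, rfl⟩ := (Int.divModEquiv L).symm.surjective t
  simp only [Int.divModEquiv_symm_apply] at ht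
  exact ⟨s, k, k.isLt, r, r.isLt, by linarith⟩

theorem Bpart_coords_emod_ediv {k r : ℕ} (hk : k < L) (hr : r < q) (s : ℤ) :
    ((s * L + k) * q + r) % q = r ∧ ((s * L + k) * q + r) / (q * L) = s := by
  obtain ⟨hdiv, hmod⟩ := (Int.ediv_emod_unique (a := (s * L + k) * q + r) (b := q) (r := r)
    (q := s * L + k) (by omega)).2 ⟨by ring, by positivity, by omega⟩
  refine ⟨hmod, ?_⟩
  rw [← Int.ediv_ediv_of_nonneg (by positivity), hdiv]
  exact ((Int.ediv_emod_unique (b := L) (r := k) (by omega)).2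
    ⟨by ring, by positivity, by omega⟩).1

theorem mem_Bpart_coords_iff {k r k' r' : ℕ} (hk : k < L) (hr : r < q) (hk' : k' < L)
    (hr' : r' < q) (s s' : ℤ) :
    (s * L + k) * q + r + 1 ∈ Bpart q L ((s' * L + k') * q + r' + 1) ↔ s = s' ∧ r = r' := by
  obtain ⟨hmod, hdiv⟩ := Bpart_coords_emod_ediv hk hr s
  obtain ⟨hmod', hdiv'⟩ := Bpart_coords_emod_ediv hk' hr' s'
  simp only [Bpart, Set.mem_ofPred_eq, ← Int.emod_sub_cancel_right 1, add_sub_cancel_right,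
    hmod, hmod', hdiv, hdiv', Nat.cast_inj]
  tauto

theorem Bpart_coords_eq_image {k r : ℕ} (hk : k < L) (hr : r < q) (s : ℤ) :
    Bpart q L ((s * L + k) * q + r + 1)
      = (fun k' : ℕ => (s * L + k') * q + r + 1) '' (range L : Set ℕ) := by
  have : NeZero q := ⟨by omega⟩
  have : NeZero L := ⟨by omega⟩
  ext y
  constructor
  · intro hy
    obtain ⟨s', k', hk', r', hr', rfl⟩ := exists_Bpart_coords (q := q) (L := L) y
    obtain ⟨rfl, rfl⟩ := (mem_Bpart_coords_iff hk' hr' hk hr s' s).1 hy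
    exact ⟨k', by simpa using hk', rfl⟩
  · rintro ⟨k', hk', rfl⟩
    exact (mem_Bpart_coords_iff (by simpa using hk') hr hk hr s s).2 ⟨rfl, rfl⟩

theorem condExp_Bpart_coords (f : ℤ → ℂ) {k r : ℕ} (hk : k < L) (hr : r < q) (s : ℤ) :
    condExp (Bpart q L) f ((s * L + k) * q + r + 1)
      = (∑ k' ∈ range L, f ((s * L + k') * q + r + 1)) / L := by
  have hinj : Injective fun k' : ℕ => (s * L + k') * q + r + 1 := by
    intro k₁ k₂ h
    simpa [show q ≠ 0 by omega] using h
  rw [condExp, Bpart_coords_eq_image hk hr, finsum_mem_image hinj.injOn, finsum_mem_coe_finset,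
    Nat.card_image_of_injective hinj, Nat.card_coe_set_eq, Set.ncard_coe_finset, card_range]

theorem hasFiniteSupport_condExp_Bpart [NeZero q] [NeZero L] {f : ℤ → ℂ}
    (hf : f.HasFiniteSupport) : (condExp (Bpart q L) f).HasFiniteSupport := by
  refine (hf.biUnion fun y _ => ?_).subset (support_condExp_subset (fun x y hy => ?_) f)
  · obtain ⟨s, k, hk, r, hr, rfl⟩ := exists_Bpart_coords (q := q) (L := L) y
    rw [Bpart_coords_eq_image hk hr]
    exact (range L).finite_toSet.image _
  · simp only [Bpart, Set.mem_ofPred_eq] at hy ⊢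
    exact ⟨hy.1.symm, hy.2.symm⟩

theorem finsum_norm_condExp_Bpart_sq [NeZero q] [NeZero L] {f : ℤ → ℂ}
    (hf : f.HasFiniteSupport) :
    ∑ᶠ x, ‖condExp (Bpart q L) f x‖ ^ 2
      = (∑ r ∈ range q, blockEnergy L (fun i => f (i * q + r + 1))) / L := by
  have hq0 : (q : ℤ) ≠ 0 := by simp [NeZero.ne q]
  have hL0 : (L : ℤ) ≠ 0 := by simp [NeZero.ne L]
  have hφ : (fun x => ‖condExp (Bpart q L) f (x + 1)‖ ^ 2).HasFiniteSupport := by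
    have := (hasFiniteSupport_condExp_Bpart (q := q) (L := L) hf).comp_of_injective
      (add_left_injective (1 : ℤ))
    fun_prop (disch := simp)
  have hatoms : ∀ s : ℤ, ∑ k ∈ range L, ∑ r ∈ range q,
      ‖condExp (Bpart q L) f ((s * L + k) * q + r + 1)‖ ^ 2
        = (∑ r ∈ range q, ‖∑ k ∈ range L, f ((s * L + k) * q + r + 1)‖ ^ 2) / L := by
    intro s
    rw [sum_congr rfl fun k hk => sum_congr rfl fun r hr => by
      rw [condExp_Bpart_coords f (mem_range.1 hk) (mem_range.1 hr)]]
    rw [sum_const, card_range, nsmul_eq_mul, mul_sum, sum_div]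
    refine sum_congr rfl fun r _ => ?_
    rw [norm_div, Complex.norm_natCast, div_pow]
    field_simp
  rw [← finsum_comp_equiv (Equiv.addRight 1)]
  simp only [Equiv.coe_addRight]
  rw [finsum_eq_finsum_sum_range_mul_add q hφ,
    finsum_eq_finsum_sum_range_mul_add L (hφ.sum_range_comp_mul_add hq0 q)]
  simp only [hatoms, div_eq_mul_inv]
  rw [← finsum_mul, finsum_sum_comm]
  · rfl
  intro r _
  have := (hf.comp_mul_add hq0 (r + 1)).sum_range_comp_mul_add hL0 L
  simp only [← add_assoc] at this
  fun_prop (disch := simp)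

end Bpart

theorem condExp_Bpart_almost_periodicity_general (q L N : ℕ) (hq : 1 ≤ q) (hL : 1 ≤ L)
    (f : ℤ → ℂ) (hbd : ∀ x, ‖f x‖ ≤ 1) (a : ℤ)
    (hsupp : Function.support f ⊆ Set.Ioc a (a + N))
    (h : ℤ) :
    |(∑ᶠ x : ℤ, ‖condExp (Bpart q L) (fun y => f (y + h)) x‖ ^ 2)
        - (∑ᶠ x : ℤ, ‖condExp (Bpart q L) f x‖ ^ 2)|
      ≤ 8 * (((|h| : ℤ) : ℝ) / (q : ℝ)) * (N : ℝ) := by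
  have : NeZero q := ⟨by omega⟩
  have : NeZero L := ⟨by omega⟩
  have hf : f.HasFiniteSupport := (Set.finite_Ioc a (a + N)).subset hsupp
  set Φ : ℤ → ℝ := fun c => blockEnergy L (fun i => f (i * q + c + 1))
  have hshift : ∀ r : ℕ, blockEnergy L (fun i => f (i * q + r + 1 + h)) = Φ (r + h) := by
    intro r
    simp only [Φ, add_right_comm _ (1 : ℤ), add_assoc]
  have hwindow := norm_sum_range_add_sub_sum_range_le Φ q
    (fun c => abs_blockEnergy_add_sub_le (by omega) hbd hsupp c) h
  rw [finsum_norm_condExp_Bpart_sq (f := fun y => f (y + h))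
      (hf.comp_of_injective (add_left_injective h)),
    finsum_norm_condExp_Bpart_sq hf, ← sub_div, abs_div, abs_of_pos (by positivity : (0 : ℝ) < L)]
  simp only [hshift]
  rw [Real.norm_eq_abs] at hwindow
  calc _ ≤ |∑ r ∈ range q, Φ (r + h) - ∑ r ∈ range q, Φ r| :=
        div_le_self (abs_nonneg _) (by exact_mod_cast hL)
    _ ≤ |h| * (4 * (N / q)) := hwindow
    _ = 4 * ((((|h| : ℤ) : ℝ) / q) * N) := by ring
    _ ≤ 8 * (((|h| : ℤ) : ℝ) / q) * N := by
        have : 0 ≤ (((|h| : ℤ) : ℝ) / q) * N := by positivity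
        linarith

theorem condExp_Bpart_almost_periodicity (q L N : ℕ) (hq : 1 ≤ q) (hL : 1 ≤ L)
    (f : ℤ → ℂ) (hbd : ∀ x, ‖f x‖ ≤ 1) (a : ℤ)
    (hsupp : Function.support f ⊆ Set.Ioc a (a + N))
    (h : ℤ) (hh : |h| < (q : ℤ)) :
    |(∑ᶠ x : ℤ, ‖condExp (Bpart q L) (fun y => f (y + h)) x‖ ^ 2)
        - (∑ᶠ x : ℤ, ‖condExp (Bpart q L) f x‖ ^ 2)|
      ≤ 8 * (((|h| : ℤ) : ℝ) / (q : ℝ)) * (N : ℝ) :=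
  condExp_Bpart_almost_periodicity_general q L N hq hL f hbd a hsupp h
end

section
/- Let $\delta \in (0,1)$, $M \geq 1$, let $I \subset \mathbb{Z}$ be an interval of length $M$, and let $(\mathcal{A}, \sigma)$ be a discrete probability space. Suppose for each $\alpha \in \mathcal{A}$ that $f_\alpha : \mathbb{Z} \to \mathbb{C}$ is $1$-bounded. If $M \geq 10\delta^{-2}$ and $\sum_{\alpha \in \mathcal{A}} \sigma(\alpha) \left| \mathbf{E}_{y \in I} f_\alpha(y) \right| \geq \delta$, then for every integer $1 \leq H \leq (\delta^2/4) M$ we have $\mathrm{Re}\left( \sum_{\alpha \in \mathcal{A}} \sum_{h \in \mathbb{Z}} \sigma(\alpha) \mu_H(h)\, \mathbf{E}_{y \in I} f_\alpha(y) \overline{f_\alpha(y+h)} \right) \geq \delta^2/4$. -/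
/-! With `F = f · 1_I` and `g y = ∑_{1 ≤ i ≤ H} F (y + i)`, the values of `g` on a window of
`M + H` points sum to `H ∑_I f`, so Cauchy–Schwarz gives `H² |∑_I f|² ≤ (M + H) ∑_y |g y|²`;
expanding `|g|²` and counting the pairs `(i, j)` with `j - i = h` turns the right side into
`(M + H) H² ∑_h μ_H(h) ∑_y F(y) \overline{F(y+h)}`. Replacing `F` by `f` in the correlation at
shift `h` costs at most `2|h|`, and `μ_H(h) · 2|h| ≤ 1/2`, so the total error is at most `H + 1/2`.
Jensen's inequality over `α` turns the hypothesis into `δ² ≤ ∑ σ |E_I f_α|²`, and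
`H ≤ δ² M / 4`, `M ≥ 10 δ⁻²` make the losses small. -/

open scoped BigOperators

/-- The Fejér kernel on `ℤ`: `μ_H(x) = (H - min(H,|x|))/H²`. -/
noncomputable def fejer (H : ℕ) (x : ℤ) : ℝ :=
  ((H : ℝ) - min (H : ℝ) (((|x| : ℤ) : ℝ))) / (H : ℝ) ^ 2

open Finset ComplexConjugate

lemma fejer_nonneg (H : ℕ) (x : ℤ) : 0 ≤ fejer H x :=
  div_nonneg (sub_nonneg.2 (min_le_left _ _)) (by positivity)

lemma fejer_eq_zero_of_le_abs {H : ℕ} {x : ℤ} (hx : (H : ℤ) ≤ |x|) : fejer H x = 0 := by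
  rw [fejer, min_eq_left (by exact_mod_cast hx), sub_self, zero_div]

lemma support_fejer_subset (H : ℕ) : Function.support (fejer H) ⊆ Icc (-(H : ℤ)) H := by
  intro x hx
  by_contra hmem
  refine hx (fejer_eq_zero_of_le_abs ?_)
  rw [coe_Icc, Set.mem_Icc] at hmem
  rw [le_abs']
  omega

lemma fejer_mul_abs_le (H : ℕ) (x : ℤ) : fejer H x * |(x : ℝ)| ≤ 1 / 4 := by
  rw [← Int.cast_abs]
  rcases le_or_gt (H : ℤ) |x| with hx | hx
  · simp [fejer_eq_zero_of_le_abs hx]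
  · have hxH : ((|x| : ℤ) : ℝ) ≤ H := by exact_mod_cast hx.le
    have hH : (0 : ℝ) < H := by exact_mod_cast (abs_nonneg x).trans_lt hx
    rw [fejer, min_eq_right hxH, div_mul_eq_mul_div, div_le_iff₀ (by positivity)]
    nlinarith [sq_nonneg ((H : ℝ) - 2 * ((|x| : ℤ) : ℝ))]

lemma card_filter_sub_eq (H : ℕ) (h : ℤ) :
    (#{p ∈ Icc (1 : ℤ) H ×ˢ Icc (1 : ℤ) H | p.2 - p.1 = h} : ℤ) = H - min (H : ℤ) |h| := by
  have hbij : #{p ∈ Icc (1 : ℤ) H ×ˢ Icc (1 : ℤ) H | p.2 - p.1 = h}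
      = #(Icc (max 1 (1 - h)) (min (H : ℤ) (H - h))) := by
    refine card_nbij' Prod.fst (fun i => (i, i + h)) ?_ ?_ ?_ ?_ <;> intro p hp <;>
      simp only [coe_filter, mem_product, mem_Icc, Set.mem_ofPred_eq, coe_Icc, Set.mem_Icc] at hp ⊢
    · omega
    · omega
    · ext <;> simp; omega
  rw [hbij, Int.card_Icc, abs_eq_max_neg]
  omega

lemma fejer_eq_card_div (H : ℕ) (h : ℤ) :
    fejer H h = #{p ∈ Icc (1 : ℤ) H ×ˢ Icc (1 : ℤ) H | p.2 - p.1 = h} / (H : ℝ) ^ 2 := by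
  have hcard := congrArg (Int.cast : ℤ → ℝ) (card_filter_sub_eq H h)
  push_cast at hcard
  rw [fejer, hcard, Int.cast_abs]

lemma sum_Icc_sum_Icc_sub_eq (H : ℕ) (c : ℤ → ℂ) :
    ∑ i ∈ Icc (1 : ℤ) H, ∑ j ∈ Icc (1 : ℤ) H, c (j - i)
      = (H : ℂ) ^ 2 * ∑ h ∈ Icc (-(H : ℤ)) H, (fejer H h : ℂ) * c h := by
  rcases eq_or_ne H 0 with rfl | hH
  · simp
  rw [← sum_product', ← sum_fiberwise_of_maps_to (g := fun p : ℤ × ℤ => p.2 - p.1)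
    (t := Icc (-(H : ℤ)) H) (fun p hp => by simp only [mem_product, mem_Icc] at hp ⊢; omega),
    mul_sum]
  refine sum_congr rfl fun h _ => ?_
  rw [sum_congr rfl fun p hp => congrArg c (mem_filter.1 hp).2, sum_const, nsmul_eq_mul,
    fejer_eq_card_div]
  push_cast
  field_simp

lemma sum_Ioc_add_eq_of_support_subset {E : Type*} [AddCommMonoid E] {F : ℤ → E} {a b k i : ℤ}
    (hF : Function.support F ⊆ Set.Ioc a b) (hi : 0 ≤ i) (hik : i ≤ k) :
    ∑ y ∈ Ioc (a - k) b, F (y + i) = ∑ y ∈ Ioc a b, F y := by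
  have hshift : ∑ y ∈ Ioc (a - k) b, F (y + i) = ∑ z ∈ Ioc (a - k + i) (b + i), F z := by
    rw [← map_add_right_Ioc, sum_map]
    rfl
  rw [hshift]
  refine (sum_subset (Ioc_subset_Ioc (by omega) (by omega)) fun y _ hy => ?_).symm
  exact Function.notMem_support.1 fun hy' => hy (by simpa using hF hy')

def autocorr (I : Finset ℤ) (f : ℤ → ℂ) (h : ℤ) : ℂ :=
  ∑ y ∈ I, f y * conj (f (y + h))

lemma sum_normSq_sum_Icc_add_eq {F : ℤ → ℂ} {a b : ℤ} (hF : Function.support F ⊆ Set.Ioc a b)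
    (H : ℕ) :
    ((∑ y ∈ Ioc (a - H) b, Complex.normSq (∑ i ∈ Icc (1 : ℤ) H, F (y + i)) : ℝ) : ℂ)
      = (H : ℂ) ^ 2 * ∑ h ∈ Icc (-(H : ℤ)) H, (fejer H h : ℂ) * autocorr (Ioc a b) F h := by
  rw [← sum_Icc_sum_Icc_sub_eq]
  push_cast
  simp_rw [← Complex.mul_conj, map_sum, sum_mul_sum]
  rw [sum_comm]
  refine sum_congr rfl fun i hi => ?_
  rw [sum_comm]
  refine sum_congr rfl fun j hj => ?_
  rw [mem_Icc] at hi hj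
  have hG : Function.support (fun z => F z * conj (F (z + (j - i)))) ⊆ Set.Ioc a b :=
    (Function.support_mul_subset_left _ _).trans hF
  rw [autocorr, ← sum_Ioc_add_eq_of_support_subset (k := H) (i := i) hG (by omega) (by omega)]
  simp_rw [add_add_sub_cancel]

lemma sq_norm_sum_le_fejer_autocorr {F : ℤ → ℂ} {a : ℤ} {M : ℕ}
    (hF : Function.support F ⊆ Set.Ioc a (a + M)) {H : ℕ} (hH : 1 ≤ H) :
    ‖∑ y ∈ Ioc a (a + M), F y‖ ^ 2
      ≤ (M + H) * (∑ h ∈ Icc (-(H : ℤ)) H, (fejer H h : ℂ) * autocorr (Ioc a (a + M)) F h).re := by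
  set g : ℤ → ℂ := fun y => ∑ i ∈ Icc (1 : ℤ) H, F (y + i)
  set Y := Ioc (a - H) (a + M)
  have hsum : ∑ y ∈ Y, g y = H * ∑ y ∈ Ioc a (a + M), F y := by
    have hshift : ∀ i ∈ Icc (1 : ℤ) H, ∑ y ∈ Y, F (y + i) = ∑ y ∈ Ioc a (a + M), F y :=
      fun i hi => by
        rw [mem_Icc] at hi
        exact sum_Ioc_add_eq_of_support_subset hF (by omega) hi.2
    rw [sum_comm, sum_congr rfl hshift, sum_const, Int.card_Icc, nsmul_eq_mul]
    simp
  have hcard : (#Y : ℝ) = M + H := by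
    rw [Int.card_Ioc, show a + M - (a - H) = ((M + H : ℕ) : ℤ) by push_cast; ring,
      Int.toNat_natCast]
    push_cast
    rfl
  have hnormSq : ∑ y ∈ Y, Complex.normSq (g y)
      = H ^ 2 * (∑ h ∈ Icc (-(H : ℤ)) H, (fejer H h : ℂ) * autocorr (Ioc a (a + M)) F h).re := by
    have h := congrArg Complex.re (sum_normSq_sum_Icc_add_eq hF H)
    rwa [← Complex.ofReal_natCast, ← Complex.ofReal_pow, Complex.re_ofReal_mul,
      Complex.ofReal_re] at h
  refine le_of_mul_le_mul_left ?_ (by positivity : (0 : ℝ) < H ^ 2)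
  calc (H : ℝ) ^ 2 * ‖∑ y ∈ Ioc a (a + M), F y‖ ^ 2 = ‖∑ y ∈ Y, g y‖ ^ 2 := by
        rw [hsum, norm_mul, mul_pow, Complex.norm_natCast]
    _ ≤ (∑ y ∈ Y, ‖g y‖) ^ 2 := pow_le_pow_left₀ (norm_nonneg _) (norm_sum_le _ _) 2
    _ ≤ #Y * ∑ y ∈ Y, ‖g y‖ ^ 2 := sq_sum_le_card_mul_sum_sq
    _ = H ^ 2 * ((M + H) * (∑ h ∈ Icc (-(H : ℤ)) H,
          (fejer H h : ℂ) * autocorr (Ioc a (a + M)) F h).re) := by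
        simp_rw [← Complex.normSq_eq_norm_sq, hnormSq, hcard]
        ring

lemma card_filter_add_notMem_Ioc_le (a b h : ℤ) :
    (#{y ∈ Ioc a b | y + h ∉ Ioc a b} : ℤ) ≤ 2 * |h| := by
  have hsub : {y ∈ Ioc a b | y + h ∉ Ioc a b} ⊆ Ioc a (a + |h|) ∪ Ioc (b - |h|) b := by
    intro y hy
    simp only [mem_filter, mem_Ioc, mem_union] at hy ⊢
    have := le_abs_self h
    have := neg_le_abs h
    omega
  have hcard := (card_le_card hsub).trans (card_union_le _ _)
  rw [Int.card_Ioc, Int.card_Ioc] at hcard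
  have := abs_nonneg h
  omega

lemma norm_autocorr_sub_autocorr_indicator_le {f : ℤ → ℂ} (hf : ∀ x, ‖f x‖ ≤ 1) (a b h : ℤ) :
    ‖autocorr (Ioc a b) f h - autocorr (Ioc a b) ((Set.Ioc a b).indicator f) h‖
      ≤ 2 * |(h : ℝ)| := by
  have hdiff : autocorr (Ioc a b) f h - autocorr (Ioc a b) ((Set.Ioc a b).indicator f) h
      = ∑ y ∈ Ioc a b with y + h ∉ Ioc a b, f y * conj (f (y + h)) := by
    rw [autocorr, autocorr, ← sum_sub_distrib, sum_filter]
    refine sum_congr rfl fun y hy => ?_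
    by_cases hyh : y + h ∈ Ioc a b <;> simp only [mem_Ioc] at hy hyh <;>
      simp [hy, hyh]
  have hcard := card_filter_add_notMem_Ioc_le a b h
  calc _ ≤ ∑ y ∈ Ioc a b with y + h ∉ Ioc a b, ‖f y * conj (f (y + h))‖ :=
        hdiff ▸ norm_sum_le _ _
    _ ≤ ∑ y ∈ Ioc a b with y + h ∉ Ioc a b, (1 : ℝ) := sum_le_sum fun y _ => by
        rw [norm_mul, Complex.norm_conj]
        exact mul_le_one₀ (hf y) (norm_nonneg _) (hf (y + h))
    _ ≤ 2 * |(h : ℝ)| := by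
        rw [sum_const, nsmul_one, ← Int.cast_natCast, ← Int.cast_abs]
        exact_mod_cast hcard

lemma norm_sum_fejer_mul_le {d : ℤ → ℂ} (H : ℕ) (hd : ∀ h, ‖d h‖ ≤ 2 * |(h : ℝ)|) :
    ‖∑ h ∈ Icc (-(H : ℤ)) H, (fejer H h : ℂ) * d h‖ ≤ H + 1 / 2 := by
  calc _ ≤ ∑ h ∈ Icc (-(H : ℤ)) H, ‖(fejer H h : ℂ) * d h‖ := norm_sum_le _ _
    _ ≤ ∑ h ∈ Icc (-(H : ℤ)) H, (1 / 2 : ℝ) := sum_le_sum fun h _ => by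
        rw [norm_mul, Complex.norm_real, Real.norm_of_nonneg (fejer_nonneg H h)]
        nlinarith [fejer_mul_abs_le H h, mul_le_mul_of_nonneg_left (hd h) (fejer_nonneg H h)]
    _ = H + 1 / 2 := by
        rw [sum_const, Int.card_Icc,
          show (H : ℤ) + 1 - -H = ((2 * H + 1 : ℕ) : ℤ) by push_cast; ring,
          Int.toNat_natCast, nsmul_eq_mul]
        push_cast
        ring

lemma sq_norm_sum_div_le_fejer_autocorr {f : ℤ → ℂ} (hf : ∀ x, ‖f x‖ ≤ 1) (a : ℤ) (M : ℕ)
    {H : ℕ} (hH : 1 ≤ H) :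
    ‖∑ y ∈ Ioc a (a + M), f y‖ ^ 2 / (M + H)
      ≤ (∑ h ∈ Icc (-(H : ℤ)) H, (fejer H h : ℂ) * autocorr (Ioc a (a + M)) f h).re
        + (H + 1 / 2) := by
  set F := (Set.Ioc a (a + M)).indicator f
  have hsum : ∑ y ∈ Ioc a (a + M), f y = ∑ y ∈ Ioc a (a + M), F y :=
    sum_congr rfl fun y hy => (Set.indicator_of_mem (by simpa using hy) f).symm
  have hsplit : ∑ h ∈ Icc (-(H : ℤ)) H, (fejer H h : ℂ) * autocorr (Ioc a (a + M)) F h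
      = ∑ h ∈ Icc (-(H : ℤ)) H, (fejer H h : ℂ) * autocorr (Ioc a (a + M)) f h
        - ∑ h ∈ Icc (-(H : ℤ)) H, (fejer H h : ℂ) *
          (autocorr (Ioc a (a + M)) f h - autocorr (Ioc a (a + M)) F h) := by
    rw [← sum_sub_distrib]
    exact sum_congr rfl fun h _ => by ring
  have herr := (abs_le.1 ((Complex.abs_re_le_norm _).trans
    (norm_sum_fejer_mul_le H (norm_autocorr_sub_autocorr_indicator_le hf a (a + M))))).1
  rw [div_le_iff₀ (by positivity), hsum]
  calc _ ≤ (M + H) * (∑ h ∈ Icc (-(H : ℤ)) H, (fejer H h : ℂ) * autocorr (Ioc a (a + M)) F h).re :=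
        sq_norm_sum_le_fejer_autocorr Set.support_indicator_subset hH
    _ ≤ _ := by
        rw [mul_comm]
        gcongr
        rw [hsplit, Complex.sub_re]
        linarith

lemma four_fifths_sq_norm_average_le {f : ℤ → ℂ} (hf : ∀ x, ‖f x‖ ≤ 1) (a : ℤ) {M H : ℕ}
    (hH : 1 ≤ H) (hHM : 4 * H ≤ M) :
    4 / 5 * ‖(∑ y ∈ Ioc a (a + M), f y) / M‖ ^ 2 - (H + 1 / 2) / M
      ≤ (∑ h ∈ Icc (-(H : ℤ)) H, (fejer H h : ℂ) * (autocorr (Ioc a (a + M)) f h / M)).re := by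
  have hM : (0 : ℝ) < M := by exact_mod_cast (by omega : 0 < M)
  have h4 : 4 * (H : ℝ) ≤ M := by exact_mod_cast hHM
  have key := sq_norm_sum_div_le_fejer_autocorr hf a M hH
  simp_rw [mul_div_assoc', ← sum_div]
  rw [Complex.div_natCast_re, norm_div, Complex.norm_natCast]
  set S := ‖∑ y ∈ Ioc a (a + M), f y‖
  have hS : 4 / 5 * S ^ 2 / M ≤ S ^ 2 / (M + H) := by
    rw [div_le_div_iff₀ hM (by positivity)]
    nlinarith [sq_nonneg S]
  calc 4 / 5 * (S / M) ^ 2 - (H + 1 / 2) / M = (4 / 5 * S ^ 2 / M - (H + 1 / 2)) / M := by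
        field_simp
    _ ≤ _ := by
        gcongr
        linarith

lemma sq_le_sum_mul_sq_of_le_sum_mul {ι : Type*} {s : Finset ι} {w x : ι → ℝ}
    (hw : ∀ i ∈ s, 0 ≤ w i) (hw1 : ∑ i ∈ s, w i = 1) {δ : ℝ} (hδ : 0 ≤ δ)
    (h : δ ≤ ∑ i ∈ s, w i * x i) :
    δ ^ 2 ≤ ∑ i ∈ s, w i * x i ^ 2 :=
  (pow_le_pow_left₀ hδ h 2).trans
    ((even_two.convexOn_pow (𝕜 := ℝ)).map_sum_le hw hw1 fun _ _ => Set.mem_univ _)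

lemma finsum_ofReal_mul_fejer_mul (s : ℝ) (H : ℕ) (X : ℤ → ℂ) :
    ∑ᶠ h : ℤ, ((s * fejer H h : ℝ) : ℂ) * X h
      = s * ∑ h ∈ Icc (-(H : ℤ)) H, (fejer H h : ℂ) * X h := by
  rw [finsum_eq_sum_of_support_subset _
      fun h hh => support_fejer_subset H fun h0 => hh (by simp [h0]),
    mul_sum]
  push_cast
  simp_rw [mul_assoc]

theorem vdc_variant_general {α : Type*} (A : Finset α) (σ : α → ℝ) (hσ0 : ∀ a, 0 ≤ σ a)
    (hσ1 : ∑ a ∈ A, σ a = 1) (δ : ℝ) (hδ : δ ∈ Set.Ioo (0 : ℝ) 1)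
    (M : ℕ) (a₀ : ℤ) (f : α → ℤ → ℂ) (hf : ∀ a x, ‖f a x‖ ≤ 1)
    (hM2 : 10 / δ ^ 2 ≤ (M : ℝ))
    (hlow : δ ≤ ∑ a ∈ A, σ a * ‖(∑ y ∈ Finset.Ioc a₀ (a₀ + M), f a y) / (M : ℂ)‖)
    (H : ℕ) (hH1 : 1 ≤ H) (hH2 : (H : ℝ) ≤ δ ^ 2 / 4 * M) :
    δ ^ 2 / 4 ≤ (∑ a ∈ A, ∑ᶠ h : ℤ, ((σ a * fejer H h : ℝ) : ℂ) *
        ((∑ y ∈ Finset.Ioc a₀ (a₀ + M),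
          f a y * (starRingEnd ℂ) (f a (y + h))) / (M : ℂ))).re := by
  obtain ⟨hδ0, hδ1⟩ := hδ
  have hδM : 10 ≤ M * δ ^ 2 := (div_le_iff₀ (by positivity)).1 hM2
  have hM : (0 : ℝ) < M := by nlinarith
  have hδ2 : δ ^ 2 ≤ 1 := by nlinarith
  have hHM : 4 * H ≤ M := by
    exact_mod_cast (show 4 * (H : ℝ) ≤ M by nlinarith [mul_le_mul_of_nonneg_right hδ2 hM.le])
  have herr : ((H : ℝ) + 1 / 2) / M ≤ 3 / 10 * δ ^ 2 := by
    rw [div_le_iff₀ hM]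
    nlinarith
  have hsq := sq_le_sum_mul_sq_of_le_sum_mul (fun a _ => hσ0 a) hσ1 hδ0.le hlow
  simp_rw [finsum_ofReal_mul_fejer_mul, Complex.re_sum, Complex.re_ofReal_mul]
  calc δ ^ 2 / 4
      ≤ ∑ a ∈ A, σ a * (4 / 5 * ‖(∑ y ∈ Ioc a₀ (a₀ + M), f a y) / M‖ ^ 2 - 3 / 10 * δ ^ 2) := by
        simp_rw [mul_sub, sum_sub_distrib, mul_left_comm (σ _), ← mul_sum, ← sum_mul, hσ1]
        nlinarith
    _ ≤ _ := sum_le_sum fun a _ => mul_le_mul_of_nonneg_left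
        ((sub_le_sub_left herr _).trans (four_fifths_sq_norm_average_le (hf a) a₀ hH1 hHM))
        (hσ0 a)

theorem vdc_variant {α : Type*} (A : Finset α) (σ : α → ℝ) (hσ0 : ∀ a, 0 ≤ σ a)
    (hσ1 : ∑ a ∈ A, σ a = 1) (δ : ℝ) (hδ : δ ∈ Set.Ioo (0 : ℝ) 1)
    (M : ℕ) (hM : 1 ≤ M) (a₀ : ℤ) (f : α → ℤ → ℂ) (hf : ∀ a x, ‖f a x‖ ≤ 1)
    (hM2 : 10 / δ ^ 2 ≤ (M : ℝ))
    (hlow : δ ≤ ∑ a ∈ A, σ a * ‖(∑ y ∈ Finset.Ioc a₀ (a₀ + M), f a y) / (M : ℂ)‖)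
    (H : ℕ) (hH1 : 1 ≤ H) (hH2 : (H : ℝ) ≤ δ ^ 2 / 4 * M) :
    δ ^ 2 / 4 ≤ (∑ a ∈ A, ∑ᶠ h : ℤ, ((σ a * fejer H h : ℝ) : ℂ) *
        ((∑ y ∈ Finset.Ioc a₀ (a₀ + M),
          f a y * (starRingEnd ℂ) (f a (y + h))) / (M : ℂ))).re :=
  vdc_variant_general A σ hσ0 hσ1 δ hδ M a₀ f hf hM2 hlow H hH1 hH2
end

section
/- Let $\delta \in (0, 1/10)$, $q, L, N_1, N_2 \geq 1$ with $L \geq \delta N_1$, let $\mathcal{A}$ be a nonempty finite set, and for each $\alpha \in \mathcal{A}$ let $f_\alpha : \mathbb{Z}^2 \to \mathbb{C}$ be $1$-bounded and supported in $[N_1] \times [N_2]$; set $F := \mathbf{E}_{\alpha \in \mathcal{A}} f_\alpha$. There is an absolute constant $C > 0$ such that if $N_1, N_2 \geq \delta^{-C}$ and $\mathbf{E}_{y \in [N_2]} \|\mathbf{E}(F_y \mid \mathcal{B}_{(qL,q)})\|_2^2 \geq \delta N_1$ (the $s = 0$ case), then $\mathbf{E}_{y \in [N_2]} \mathbf{E}_{|h|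 \leq N_2} \left| \mathbf{E}_{x \in [N_1], \alpha \in \mathcal{A}} f_\alpha(x, y) \overline{f_\alpha(x, y + h)} \right| \geq \delta^C$. -/
open scoped BigOperators

/-!
Since conditional expectation is self-adjoint, `∑ₓ |𝔼(F_y | 𝓑)(x)|² ≤ ∑ₓ |F_y(x)| |𝔼(F_y | 𝓑)(x)|`,
so the hypothesis yields a point `x₀ ∈ [N₁]` with `∑_y |𝔼(F_y | 𝓑)(x₀)| ≥ δ N₂`. Let `B` be the
atom of `x₀` and `ψ(y)` the conjugate phase of `𝔼(F_y | 𝓑)(x₀)`. Expanding the square, the mass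
`∑_{x,α} |∑_y ψ(y) f_α(x, y)|²` is at most the sum over pairs `y, y'` of the absolute correlations
`|∑_{x,α} f_α(x, y) conj f_α(x, y')|`, while Cauchy–Schwarz on `B × 𝒜` bounds it below by
`|B| |𝒜| (δ N₂)² ≥ |𝒜| δ³ N₁ N₂²`, because `|B| = L ≥ δ N₁`. This gives the claim with `C = 4`.
-/

open Finset ComplexConjugate

def IsAtomMap (P : ℤ → Set ℤ) : Prop := ∀ x y, y ∈ P x ↔ P y = P x

namespace IsAtomMap

variable {P : ℤ → Set ℤ}

lemma mem_self (hP : IsAtomMap P) (x : ℤ) : x ∈ P x := (hP x x).2 rfl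

lemma mem_comm (hP : IsAtomMap P) {x y : ℤ} : y ∈ P x ↔ x ∈ P y := by
  rw [hP, hP, eq_comm]

lemma natCard_ne_zero (hP : IsAtomMap P) (hfin : ∀ x, (P x).Finite) (x : ℤ) :
    Nat.card (P x) ≠ 0 :=
  Nat.card_ne_zero.2 ⟨⟨⟨x, hP.mem_self x⟩⟩, (hfin x).to_subtype⟩

end IsAtomMap

namespace condExp

variable {P : ℤ → Set ℤ}

lemma eq_of_mem (hP : IsAtomMap P) (g : ℤ → ℂ) {x y : ℤ} (hy : y ∈ P x) :
    condExp P g y = condExp P g x := by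
  rw [condExp, condExp, (hP x y).1 hy]

lemma eq_sum_toFinset (hfin : ∀ x, (P x).Finite) (g : ℤ → ℂ) (x : ℤ) :
    condExp P g x = (∑ t ∈ (hfin x).toFinset, g t) / (Nat.card (P x) : ℂ) := by
  rw [condExp, finsum_mem_eq_finite_toFinset_sum _ (hfin x)]

lemma natCard_mul_eq_sum (hP : IsAtomMap P) (hfin : ∀ x, (P x).Finite) (g : ℤ → ℂ) (x : ℤ) :
    (Nat.card (P x) : ℂ) * condExp P g x = ∑ t ∈ (hfin x).toFinset, g t := by
  rw [eq_sum_toFinset hfin, mul_div_cancel₀ _ (by exact_mod_cast hP.natCard_ne_zero hfin x)]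

lemma norm_sq_le_sum (hP : IsAtomMap P) (hfin : ∀ x, (P x).Finite) {X : Finset ℤ} {g : ℤ → ℂ}
    (hg : ∀ t, g t ≠ 0 → t ∈ X) (x : ℤ) :
    ‖condExp P g x‖ ^ 2 ≤
      ∑ t ∈ X ∩ (hfin x).toFinset, ‖g t‖ * ‖condExp P g t‖ / Nat.card (P t) := by
  have hsum : ∑ t ∈ (hfin x).toFinset, g t = ∑ t ∈ X ∩ (hfin x).toFinset, g t :=
    (sum_subset inter_subset_right fun t ht hX =>
      not_not.1 fun h => hX (mem_inter.2 ⟨hg t h, ht⟩)).symm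
  calc ‖condExp P g x‖ ^ 2
      = ‖condExp P g x‖ * ‖∑ t ∈ X ∩ (hfin x).toFinset, g t‖ / Nat.card (P x) := by
        conv_lhs => rw [sq]; arg 2; rw [eq_sum_toFinset hfin, hsum]
        rw [norm_div, Complex.norm_natCast, mul_div_assoc]
    _ ≤ ‖condExp P g x‖ * (∑ t ∈ X ∩ (hfin x).toFinset, ‖g t‖) / Nat.card (P x) := by
        gcongr
        exact norm_sum_le _ _
    _ = ∑ t ∈ X ∩ (hfin x).toFinset, ‖g t‖ * ‖condExp P g t‖ / Nat.card (P t) := by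
        rw [mul_sum, sum_div]
        refine sum_congr rfl fun t ht => ?_
        have ht : t ∈ P x := by simpa using (mem_inter.1 ht).2
        rw [eq_of_mem hP g ht, (hP x t).1 ht, mul_comm]

lemma finsum_norm_sq_le (hP : IsAtomMap P) (hfin : ∀ x, (P x).Finite) {X : Finset ℤ}
    {g : ℤ → ℂ} (hg : ∀ t, g t ≠ 0 → t ∈ X) :
    ∑ᶠ x, ‖condExp P g x‖ ^ 2 ≤ ∑ t ∈ X, ‖g t‖ * ‖condExp P g t‖ := by
  set U := X.biUnion fun t => (hfin t).toFinset
  have hsupp : (Function.support fun x => ‖condExp P g x‖ ^ 2) ⊆ U := by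
    intro x hx
    obtain ⟨t, ht⟩ : (X ∩ (hfin x).toFinset).Nonempty := by
      refine nonempty_iff_ne_empty.2 fun h => hx ?_
      exact le_antisymm (by simpa [h] using norm_sq_le_sum hP hfin hg x) (sq_nonneg _)
    rw [mem_inter, Set.Finite.mem_toFinset, hP.mem_comm] at ht
    exact mem_biUnion.2 ⟨t, ht.1, (hfin t).mem_toFinset.2 ht.2⟩
  rw [finsum_eq_sum_of_support_subset _ hsupp]
  calc ∑ x ∈ U, ‖condExp P g x‖ ^ 2
      ≤ ∑ x ∈ U, ∑ t ∈ X ∩ (hfin x).toFinset, ‖g t‖ * ‖condExp P g t‖ / Nat.card (P t) :=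
        sum_le_sum fun x _ => norm_sq_le_sum hP hfin hg x
    _ = ∑ t ∈ X, ∑ x ∈ (hfin t).toFinset, ‖g t‖ * ‖condExp P g t‖ / Nat.card (P t) := by
        refine sum_comm' fun x t => ?_
        simp only [U, mem_inter, mem_biUnion, Set.Finite.mem_toFinset, hP.mem_comm (x := x)]
        exact ⟨fun ⟨_, h⟩ => h.symm, fun ⟨hx, ht⟩ => ⟨⟨t, ht, hx⟩, ht, hx⟩⟩
    _ = ∑ t ∈ X, ‖g t‖ * ‖condExp P g t‖ := by
        refine sum_congr rfl fun t _ => ?_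
        have := hP.natCard_ne_zero hfin t
        rw [sum_const, nsmul_eq_mul, ← Nat.card_eq_card_finite_toFinset]
        field_simp

lemma exists_le_sum_norm (hP : IsAtomMap P) (hfin : ∀ x, (P x).Finite) {ι : Type*}
    {X : Finset ℤ} (hX : X.Nonempty) (Y : Finset ι) {G : ι → ℤ → ℂ}
    (hG : ∀ y t, ‖G y t‖ ≤ 1) (hGX : ∀ y t, G y t ≠ 0 → t ∈ X) {c : ℝ}
    (h : c * #X ≤ ∑ y ∈ Y, ∑ᶠ x, ‖condExp P (G y) x‖ ^ 2) :
    ∃ x ∈ X, c ≤ ∑ y ∈ Y, ‖condExp P (G y) x‖ := by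
  refine exists_le_of_sum_le hX ?_
  calc ∑ _ ∈ X, c = c * #X := by rw [sum_const, nsmul_eq_mul, mul_comm]
    _ ≤ ∑ y ∈ Y, ∑ᶠ x, ‖condExp P (G y) x‖ ^ 2 := h
    _ ≤ ∑ y ∈ Y, ∑ x ∈ X, ‖G y x‖ * ‖condExp P (G y) x‖ :=
        sum_le_sum fun y _ => finsum_norm_sq_le hP hfin (hGX y)
    _ ≤ ∑ y ∈ Y, ∑ x ∈ X, ‖condExp P (G y) x‖ := by
        gcongr with y _ x _
        exact mul_le_of_le_one_left (norm_nonneg _) (hG y x)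
    _ = ∑ x ∈ X, ∑ y ∈ Y, ‖condExp P (G y) x‖ := sum_comm

end condExp

namespace Bpart

variable {q L : ℕ}

lemma isAtomMap : IsAtomMap (Bpart q L) := by
  refine fun x y => ⟨fun h => ?_, fun h => h ▸ ⟨rfl, rfl⟩⟩
  ext z
  simp only [Bpart, Set.mem_ofPred_eq] at h ⊢
  rw [h.1, h.2]

lemma subset_Icc (hq : 0 < q) (hL : 0 < L) (x : ℤ) :
    Bpart q L x ⊆ Set.Icc ((q : ℤ) * L * ((x - 1) / (q * L)) + 1)
      ((q : ℤ) * L * ((x - 1) / (q * L)) + q * L) := by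
  intro y ⟨_, hy⟩
  have hM : (0 : ℤ) < q * L := by positivity
  have h₁ := Int.ediv_mul_le (y - 1) hM.ne'
  have h₂ := Int.lt_ediv_add_one_mul_self (y - 1) hM
  rw [hy] at h₁ h₂
  constructor <;> nlinarith

lemma finite (hq : 0 < q) (hL : 0 < L) (x : ℤ) : (Bpart q L x).Finite :=
  (Set.finite_Icc _ _).subset (subset_Icc hq hL x)

lemma le_natCard (hq : 0 < q) (hL : 0 < L) (x : ℤ) : L ≤ Nat.card (Bpart q L x) := by
  set s := (x - 1) / (q * L)
  set r := (x - 1) % q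
  have hqz : (0 : ℤ) < q := by positivity
  have hM : (0 : ℤ) < q * L := by positivity
  rw [Nat.card_eq_card_finite_toFinset (finite hq hL x)]
  calc L = #(range L) := (card_range L).symm
    _ ≤ _ := card_le_card_of_injOn (fun k : ℕ => q * L * s + r + q * k + 1) ?_ ?_
  · intro k hk
    have hk : (k : ℤ) < L := by simpa using hk
    have hr₀ : 0 ≤ r := Int.emod_nonneg _ hqz.ne'
    have hr₁ : r < q := Int.emod_lt_of_pos _ hqz
    refine (finite hq hL x).mem_toFinset.2 ⟨?_, ?_⟩
    · refine Int.ModEq.eq (Int.modEq_iff_dvd.2 ⟨(x - 1) / q - L * s - k, ?_⟩)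
      linear_combination -Int.mul_ediv_add_emod (x - 1) q
    · rw [show q * L * s + r + q * k + 1 - 1 = r + q * k + q * L * s by ring,
        Int.add_mul_ediv_left _ _ hM.ne', Int.ediv_eq_zero_of_lt (by positivity) (by nlinarith),
        zero_add]
  · intro k _ k' _ h
    have : (q : ℤ) * k = q * k' := by simpa using h
    exact_mod_cast mul_left_cancel₀ hqz.ne' this

end Bpart

section Correlation

variable {ι κ : Type*}

lemma sum_norm_sq_le_sum_norm_correlation (Y : Finset ι) (I : Finset κ) (u : ι → κ → ℂ)
    {ψ : ι → ℂ} (hψ : ∀ y, ‖ψ y‖ ≤ 1) :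
    ∑ i ∈ I, ‖∑ y ∈ Y, ψ y * u y i‖ ^ 2 ≤
      ∑ y ∈ Y, ∑ y' ∈ Y, ‖∑ i ∈ I, u y i * conj (u y' i)‖ := by
  have hexpand : ((∑ i ∈ I, ‖∑ y ∈ Y, ψ y * u y i‖ ^ 2 : ℝ) : ℂ) =
      ∑ y ∈ Y, ∑ y' ∈ Y, ψ y * conj (ψ y') * ∑ i ∈ I, u y i * conj (u y' i) := by
    push_cast
    simp_rw [← Complex.mul_conj', map_sum, map_mul, sum_mul_sum, mul_sum]
    rw [sum_comm]
    refine sum_congr rfl fun y _ => ?_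
    rw [sum_comm]
    exact sum_congr rfl fun y' _ => sum_congr rfl fun i _ => by ring
  calc ∑ i ∈ I, ‖∑ y ∈ Y, ψ y * u y i‖ ^ 2
      = ‖((∑ i ∈ I, ‖∑ y ∈ Y, ψ y * u y i‖ ^ 2 : ℝ) : ℂ)‖ := by
        rw [Complex.norm_real, Real.norm_of_nonneg (by positivity)]
    _ ≤ ∑ y ∈ Y, ∑ y' ∈ Y, ‖ψ y * conj (ψ y') * ∑ i ∈ I, u y i * conj (u y' i)‖ := by
        rw [hexpand]
        exact (norm_sum_le _ _).trans (sum_le_sum fun y _ => norm_sum_le _ _)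
    _ ≤ ∑ y ∈ Y, ∑ y' ∈ Y, ‖∑ i ∈ I, u y i * conj (u y' i)‖ := by
        gcongr with y _ y' _
        rw [norm_mul, norm_mul, Complex.norm_conj]
        exact mul_le_of_le_one_left (norm_nonneg _)
          (mul_le_one₀ (hψ y) (norm_nonneg _) (hψ y'))

lemma norm_sum_sq_le_card_mul_sum_norm_correlation (Y : Finset ι) {I : Finset κ} (J : Finset κ)
    {u : ι → κ → ℂ} (hu : ∀ y, ∀ i ∈ J, u y i ≠ 0 → i ∈ I) {ψ : ι → ℂ}
    (hψ : ∀ y, ‖ψ y‖ ≤ 1) :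
    ‖∑ i ∈ J, ∑ y ∈ Y, ψ y * u y i‖ ^ 2 ≤
      #J * ∑ y ∈ Y, ∑ y' ∈ Y, ‖∑ i ∈ I, u y i * conj (u y' i)‖ := by
  classical
  set w := fun i => ∑ y ∈ Y, ψ y * u y i
  have hw : ∀ i ∈ J, i ∉ I → w i = 0 := fun i hJ hI =>
    sum_eq_zero fun y _ => by rw [not_not.1 (mt (hu y i hJ) hI), mul_zero]
  calc ‖∑ i ∈ J, w i‖ ^ 2 ≤ (∑ i ∈ J, ‖w i‖) ^ 2 := by gcongr; exact norm_sum_le _ _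
    _ ≤ #J * ∑ i ∈ J, ‖w i‖ ^ 2 := sq_sum_le_card_mul_sum_sq
    _ ≤ #J * ∑ i ∈ J ∪ I, ‖w i‖ ^ 2 := by gcongr; exact subset_union_left
    _ = #J * ∑ i ∈ I, ‖w i‖ ^ 2 := by
        refine congrArg _ (sum_subset subset_union_right fun i hJI hI => ?_).symm
        rw [hw i ((mem_union.1 hJI).resolve_right hI) hI, norm_zero, sq, zero_mul]
    _ ≤ _ := by gcongr; exact sum_norm_sq_le_sum_norm_correlation Y I u hψ

end Correlation

lemma conj_div_norm_mul_self (z : ℂ) : conj z / ‖z‖ * z = ‖z‖ := by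
  rw [div_mul_eq_mul_div, Complex.conj_mul']
  rcases eq_or_ne ‖z‖ 0 with h | h
  · simp [h]
  · field_simp

lemma norm_conj_div_norm_le_one (z : ℂ) : ‖conj z / ‖z‖‖ ≤ 1 := by
  rw [norm_div, Complex.norm_conj, Complex.norm_real, Real.norm_of_nonneg (norm_nonneg z)]
  exact div_self_le_one _

lemma card_mul_sq_sum_norm_le_sum_norm_correlation {α : Type*} (A : Finset α)
    (X B Y : Finset ℤ) {f : α → ℤ × ℤ → ℂ} (hf : ∀ a x y, f a (x, y) ≠ 0 → x ∈ X) {φ : ℤ → ℂ}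
    (hφ : ∀ y, ∑ x ∈ B, ∑ a ∈ A, f a (x, y) = (#B * #A : ℂ) * φ y) :
    #B * #A * (∑ y ∈ Y, ‖φ y‖) ^ 2 ≤
      ∑ y ∈ Y, ∑ y' ∈ Y, ‖∑ x ∈ X, ∑ a ∈ A, f a (x, y) * conj (f a (x, y'))‖ := by
  have key := norm_sum_sq_le_card_mul_sum_norm_correlation Y (I := X ×ˢ A) (B ×ˢ A)
    (u := fun y i => f i.2 (i.1, y))
    (fun y i hi hne => mem_product.2 ⟨hf _ _ _ hne, (mem_product.1 hi).2⟩)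
    (fun y => norm_conj_div_norm_le_one (φ y))
  have hsum : ∑ i ∈ B ×ˢ A, ∑ y ∈ Y, conj (φ y) / ‖φ y‖ * f i.2 (i.1, y) =
      (#B * #A : ℂ) * ((∑ y ∈ Y, ‖φ y‖ : ℝ) : ℂ) := by
    rw [sum_comm, Complex.ofReal_sum, mul_sum]
    refine sum_congr rfl fun y _ => ?_
    rw [← mul_sum, sum_product, hφ, mul_left_comm, conj_div_norm_mul_self]
  rw [hsum, norm_mul, Complex.norm_real, Real.norm_of_nonneg (by positivity), card_product,
    Nat.cast_mul] at key
  simp_rw [sum_product] at key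
  rw [Complex.norm_mul, Complex.norm_natCast, Complex.norm_natCast] at key
  rcases (by positivity : (0 : ℝ) ≤ #B * #A).eq_or_lt with h | h
  · rw [← h, zero_mul]
    positivity
  · refine le_of_mul_le_mul_left ?_ h
    linarith

lemma sum_Icc_le_sum_Icc_neg_add {g : ℤ → ℝ} (hg : ∀ t, 0 ≤ g t) {N y : ℤ} (hy : y ∈ Icc 1 N) :
    ∑ t ∈ Icc 1 N, g t ≤ ∑ h ∈ Icc (-N) N, g (y + h) :=
  calc ∑ t ∈ Icc 1 N, g t ≤ ∑ t ∈ (Icc (-N) N).map (addLeftEmbedding y), g t := by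
        rw [map_add_left_Icc]
        refine sum_le_sum_of_subset_of_nonneg (fun t ht => ?_) fun t _ _ => hg t
        rw [mem_Icc] at hy ht ⊢
        omega
    _ = ∑ h ∈ Icc (-N) N, g (y + h) := sum_map _ _ _

lemma mul_le_sum_sum_norm_correlation {α : Type*} {A : Finset α} (hA : A.Nonempty)
    {q L N₁ N₂ : ℕ} (hq : 0 < q) (hL : 0 < L) (hN₁ : 0 < N₁) {δ : ℝ} (hδ : 0 ≤ δ)
    (hδL : δ * N₁ ≤ L) {f : α → ℤ × ℤ → ℂ} (hf : ∀ a p, ‖f a p‖ ≤ 1)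
    (hsupp : ∀ a p, f a p ≠ 0 → p.1 ∈ Icc (1 : ℤ) N₁)
    (hyp : δ * N₁ * N₂ ≤ ∑ y ∈ Icc (1 : ℤ) N₂,
      ∑ᶠ x, ‖condExp (Bpart q L) (fun t => (∑ a ∈ A, f a (t, y)) / (#A : ℂ)) x‖ ^ 2) :
    #A * (δ * N₁) * (δ * N₂) ^ 2 ≤ ∑ y ∈ Icc (1 : ℤ) N₂, ∑ h ∈ Icc (-(N₂ : ℤ)) N₂,
      ‖∑ x ∈ Icc (1 : ℤ) N₁, ∑ a ∈ A, f a (x, y) * conj (f a (x, y + h))‖ := by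
  set X := Icc (1 : ℤ) N₁
  set Y := Icc (1 : ℤ) N₂
  set G : ℤ → ℤ → ℂ := fun y t => (∑ a ∈ A, f a (t, y)) / (#A : ℂ)
  have hA₀ : (#A : ℂ) ≠ 0 := by exact_mod_cast hA.card_pos.ne'
  have hG : ∀ y t, ‖G y t‖ ≤ 1 := fun y t => by
    rw [norm_div, Complex.norm_natCast, div_le_one (by exact_mod_cast hA.card_pos)]
    exact (norm_sum_le _ _).trans (by simpa using sum_le_sum fun a _ => hf a (t, y))
  have hGX : ∀ y t, G y t ≠ 0 → t ∈ X := fun y t h => by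
    obtain ⟨a, -, ha⟩ := exists_ne_zero_of_sum_ne_zero (left_ne_zero_of_mul h)
    exact hsupp a _ ha
  obtain ⟨x₀, -, hx₀⟩ := condExp.exists_le_sum_norm Bpart.isAtomMap (Bpart.finite hq hL)
    (nonempty_Icc.2 (by exact_mod_cast hN₁)) Y hG hGX (c := δ * N₂) (by simpa [X, mul_right_comm])
  set B := (Bpart.finite hq hL x₀).toFinset
  have hB : Nat.card (Bpart q L x₀) = #B := Nat.card_eq_card_finite_toFinset _
  have hcorr := card_mul_sq_sum_norm_le_sum_norm_correlation A X B Y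
    (fun a x y h => hsupp a (x, y) h) (φ := fun y => condExp (Bpart q L) (G y) x₀) fun y => by
      rw [mul_right_comm, ← hB, condExp.natCard_mul_eq_sum Bpart.isAtomMap (Bpart.finite hq hL),
        sum_mul]
      exact sum_congr rfl fun t _ => (div_mul_cancel₀ _ hA₀).symm
  calc #A * (δ * N₁) * (δ * N₂) ^ 2
      ≤ #B * #A * (∑ y ∈ Y, ‖condExp (Bpart q L) (G y) x₀‖) ^ 2 := by
        rw [mul_comm (#B : ℝ)]
        gcongr
        exact hδL.trans (by exact_mod_cast hB ▸ Bpart.le_natCard hq hL x₀)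
    _ ≤ _ := hcorr.trans (sum_le_sum fun y hy =>
        sum_Icc_le_sum_Icc_neg_add (fun _ => norm_nonneg _) hy)

theorem dual_difference_interchange_base :
    ∃ C : ℝ, 0 < C ∧
      ∀ {α : Type} (A : Finset α), A.Nonempty →
      ∀ (q L N₁ N₂ : ℕ), 1 ≤ q → 1 ≤ L → 1 ≤ N₁ → 1 ≤ N₂ →
      ∀ δ : ℝ, δ ∈ Set.Ioo (0 : ℝ) (1 / 10) →
        δ * N₁ ≤ (L : ℝ) → δ ^ (-C) ≤ (N₁ : ℝ) → δ ^ (-C) ≤ (N₂ : ℝ) →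
        ∀ f : α → ℤ × ℤ → ℂ, (∀ a p, ‖f a p‖ ≤ 1) →
          (∀ a p, f a p ≠ 0 → p.1 ∈ Finset.Icc (1 : ℤ) (N₁ : ℤ) ∧
            p.2 ∈ Finset.Icc (1 : ℤ) (N₂ : ℤ)) →
          δ * N₁ ≤ (∑ y ∈ Finset.Icc (1 : ℤ) (N₂ : ℤ),
              ∑ᶠ x : ℤ, ‖condExp (Bpart q L)
                (fun t => (∑ a ∈ A, f a (t, y)) / (A.card : ℂ)) x‖ ^ 2) / (N₂ : ℝ) →
          δ ^ C ≤ (∑ y ∈ Finset.Icc (1 : ℤ) (N₂ : ℤ),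
              ∑ h ∈ Finset.Icc (-(N₂ : ℤ)) (N₂ : ℤ),
                ‖(∑ x ∈ Finset.Icc (1 : ℤ) (N₁ : ℤ), ∑ a ∈ A,
                    f a (x, y) * (starRingEnd ℂ) (f a (x, y + h)))
                  / ((N₁ : ℂ) * (A.card : ℂ))‖)
            / ((N₂ : ℝ) * (2 * (N₂ : ℝ) + 1)) := by
  refine ⟨4, by norm_num, fun A hA q L N₁ N₂ hq hL hN₁ hN₂ δ ⟨hδ₀, hδ⟩ hδL _ _ f hf hsupp hyp => ?_⟩
  have hS := mul_le_sum_sum_norm_correlation hA hq hL hN₁ hδ₀.le hδL hf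
    (fun a p h => (hsupp a p h).1) (by rwa [le_div_iff₀ (by positivity)] at hyp)
  have hN₂' : (1 : ℝ) ≤ N₂ := by exact_mod_cast hN₂
  have hδN₂ : δ * (2 * N₂ + 1) ≤ N₂ := by nlinarith
  simp_rw [norm_div, norm_mul, Complex.norm_natCast, ← sum_div, div_div]
  rw [Real.rpow_ofNat, le_div_iff₀ (by positivity)]
  calc δ ^ 4 * (N₁ * #A * (N₂ * (2 * N₂ + 1)))
      = δ ^ 3 * N₁ * #A * N₂ * (δ * (2 * N₂ + 1)) := by ring
    _ ≤ δ ^ 3 * N₁ * #A * N₂ * N₂ := by gcongr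
    _ = #A * (δ * N₁) * (δ * N₂) ^ 2 := by ring
    _ ≤ _ := hS
end
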